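/- arXiv:1209.1406 — 7 statements merged into one kernel-verified Lean document; each statement's English description precedes it below -/
import Mathlib

section
/- Suppose the exact sets of the one-dimensional approximations are nested: for every i and all m ≤ m′, E(L^{(i)}_m) ⊆ E(L^{(i)}_{m′}). Let K ⊆ {1,2,…}^d be a finite admissible multi-index set. Then for every multi-index k* ∈ K and every choice of elements f_i ∈ E(L^{(i)}_{k*_i}) (i = 1,…,d), the Smolyak operator is exact on the elementary tensor f_1 ⊗ ⋯ ⊗ f_d: A(K,d,L)(f_1 ⊗ ⋯ ⊗ f_d) = (L^{(1)} ⊗ ⋯ ⊗ L^{(d)})(f_1 ⊗ ⋯ ⊗ f_d). Consequently the exact set of A(K,d,L) contains the span of the union over k ∈ K of the tensor products E(L^{(1)}_{k_1}) ⊗ ⋯ ⊗ E(L^{(d)}_{k_d}). -/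
open scoped TensorProduct

private theorem smolyak_telescope {W : Type*} [AddCommGroup W] (g : ℕ → W) (n : ℕ) :
    ∑ m ∈ Finset.Icc 1 n, (g m - g (m - 1)) = g n - g 0 := by
  induction n with
  | zero => simp
  | succ n ih =>
    rw [Finset.sum_Icc_succ_top (by omega : 1 ≤ n + 1), ih]
    simp only [Nat.add_sub_cancel]
    abel


theorem boxmem (d : ℕ) (K : Finset (Fin d → ℕ))
    (hadm : ∀ k ∈ K, ∀ i, 2 ≤ k i → Function.update k i (k i - 1) ∈ K)
    (kstar : Fin d → ℕ) (hks : kstar ∈ K) :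
    ∀ n (k : Fin d → ℕ), (∀ i, 1 ≤ k i) → (∀ i, k i ≤ kstar i) →
      (∑ i, (kstar i - k i)) = n → k ∈ K := by
  intro n
  induction n with
  | zero =>
    intro k h1 h2 hsum
    have : k = kstar := by
      funext i
      have := Finset.sum_eq_zero_iff.mp hsum i (Finset.mem_univ i)
      have := h2 i
      omega
    rwa [this]
  | succ n ih =>
    intro k h1 h2 hsum
    have hex : ∃ i, k i < kstar i := by
      by_contra h
      push_neg at h
      have : ∑ i, (kstar i - k i) = 0 := Finset.sum_eq_zero fun i _ => by
        have := h i; omega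
      omega
    obtain ⟨i, hi⟩ := hex
    set k' := Function.update k i (k i + 1) with hk'
    have hk'i : k' i = k i + 1 := by simp [hk']
    have hk'j : ∀ j, j ≠ i → k' j = k j := fun j hj => Function.update_of_ne hj _ _
    have hsum' : ∑ j, (kstar j - k' j) = n := by
      have e1 : ∑ j, (kstar j - k j)
          = (kstar i - k i) + ∑ j ∈ Finset.univ.erase i, (kstar j - k j) :=
        (Finset.add_sum_erase _ _ (Finset.mem_univ i)).symm
      have e2 : ∑ j, (kstar j - k' j)
          = (kstar i - k' i) + ∑ j ∈ Finset.univ.erase i, (kstar j - k' j) :=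
        (Finset.add_sum_erase _ _ (Finset.mem_univ i)).symm
      have e3 : ∑ j ∈ Finset.univ.erase i, (kstar j - k' j)
          = ∑ j ∈ Finset.univ.erase i, (kstar j - k j) :=
        Finset.sum_congr rfl fun j hj => by rw [hk'j j (Finset.ne_of_mem_erase hj)]
      rw [e2, e3, hk'i]
      omega
    have hk'mem : k' ∈ K := by
      apply ih k' ?_ ?_ hsum'
      · intro j
        by_cases hji : j = i
        · subst hji; omega
        · rw [hk'j j hji]; exact h1 j
      · intro j
        by_cases hji : j = i
        · subst hji; omega
        · rw [hk'j j hji]; exact h2 j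
    have := hadm k' hk'mem i (by rw [hk'i]; have := h1 i; omega)
    have hkk : Function.update k' i (k' i - 1) = k := by
      funext j
      by_cases hji : j = i
      · subst hji; rw [Function.update_self, hk'i]; omega
      · rw [Function.update_of_ne hji, hk'j j hji]
    rwa [hkk] at this


/-- (Exactness of Smolyak algorithms, Theorem 3.1 of the paper.)
Suppose the exact sets of the one-dimensional approximations `Lapp i m` (relative to the
true operators `Ltrue i`) are nested in the level `m`, with `Lapp i 0 = 0`.  Let `K` be a
finite admissible multi-index set (entries `≥ 1`, closed under backward neighbors).  Then
for every `k* ∈ K` and every choice of `f i ∈ E(Lapp i (k* i))`, the Smolyak operator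
`A(K,d,L) = ∑_{k ∈ K} Δ_{k 1} ⊗ ⋯ ⊗ Δ_{k d}` is exact on the elementary tensor
`f 1 ⊗ ⋯ ⊗ f d`; consequently its exact set contains the span of the union over `k ∈ K`
of the tensor products of the one-dimensional exact sets. -/
theorem smolyak_exactness (d : ℕ)
    (V W : Fin d → Type*)
    [∀ i, AddCommGroup (V i)] [∀ i, Module ℝ (V i)]
    [∀ i, AddCommGroup (W i)] [∀ i, Module ℝ (W i)]
    (Ltrue : ∀ i, V i →ₗ[ℝ] W i)
    (Lapp : ∀ i, ℕ → (V i →ₗ[ℝ] W i))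
    (hzero : ∀ i, Lapp i 0 = 0)
    (hnested : ∀ i, ∀ m m' : ℕ, m ≤ m' → ∀ v : V i,
      Lapp i m v = Ltrue i v → Lapp i m' v = Ltrue i v)
    (K : Finset (Fin d → ℕ))
    (hpos : ∀ k ∈ K, ∀ i, 1 ≤ k i)
    (hadm : ∀ k ∈ K, ∀ i, 2 ≤ k i → Function.update k i (k i - 1) ∈ K) :
    (∀ kstar ∈ K, ∀ f : ∀ i, V i,
      (∀ i, Lapp i (kstar i) (f i) = Ltrue i (f i)) →
      (∑ k ∈ K, PiTensorProduct.map (fun i => Lapp i (k i) - Lapp i (k i - 1)))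
          (PiTensorProduct.tprod ℝ f)
        = PiTensorProduct.map Ltrue (PiTensorProduct.tprod ℝ f)) ∧
    (∀ x ∈ Submodule.span ℝ
        {x : ⨂[ℝ] i, V i | ∃ k ∈ K, ∃ f : ∀ i, V i,
          (∀ i, Lapp i (k i) (f i) = Ltrue i (f i)) ∧ x = PiTensorProduct.tprod ℝ f},
      (∑ k ∈ K, PiTensorProduct.map (fun i => Lapp i (k i) - Lapp i (k i - 1))) x
        = PiTensorProduct.map Ltrue x) := by
  have part1 : ∀ kstar ∈ K, ∀ f : ∀ i, V i,
      (∀ i, Lapp i (kstar i) (f i) = Ltrue i (f i)) →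
      (∑ k ∈ K, PiTensorProduct.map (fun i => Lapp i (k i) - Lapp i (k i - 1)))
          (PiTensorProduct.tprod ℝ f)
        = PiTensorProduct.map Ltrue (PiTensorProduct.tprod ℝ f) := by
    intro kstar hks f hf
    rw [LinearMap.sum_apply]
    have hterm : ∀ k : Fin d → ℕ,
        PiTensorProduct.map (fun i => Lapp i (k i) - Lapp i (k i - 1))
          (PiTensorProduct.tprod ℝ f)
        = PiTensorProduct.tprod ℝ
            (fun i => Lapp i (k i) (f i) - Lapp i (k i - 1) (f i)) := by
      intro k
      rw [PiTensorProduct.map_tprod]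
      rfl
    set S : Finset (Fin d → ℕ) := Fintype.piFinset (fun i => Finset.Icc 1 (kstar i)) with hS
    have hSK : S ⊆ K := by
      intro k hk
      rw [hS, Fintype.mem_piFinset] at hk
      exact boxmem d K hadm kstar hks (∑ i, (kstar i - k i)) k
        (fun i => (Finset.mem_Icc.mp (hk i)).1)
        (fun i => (Finset.mem_Icc.mp (hk i)).2) rfl
    have hvanish : ∀ k ∈ K, k ∉ S →
        PiTensorProduct.map (fun i => Lapp i (k i) - Lapp i (k i - 1))
          (PiTensorProduct.tprod ℝ f) = 0 := by
      intro k hk hkS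
      rw [hS, Fintype.mem_piFinset] at hkS
      push_neg at hkS
      obtain ⟨i, hi⟩ := hkS
      rw [Finset.mem_Icc] at hi
      push_neg at hi
      have h1 := hpos k hk i
      have hgt : kstar i < k i := hi h1
      have e1 : Lapp i (k i) (f i) = Ltrue i (f i) :=
        hnested i (kstar i) (k i) (by omega) (f i) (hf i)
      have e2 : Lapp i (k i - 1) (f i) = Ltrue i (f i) :=
        hnested i (kstar i) (k i - 1) (by omega) (f i) (hf i)
      rw [hterm k]
      exact (PiTensorProduct.tprod ℝ).map_coord_zero i (by rw [e1, e2, sub_self])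
    rw [← Finset.sum_subset hSK (fun k hk hkS => hvanish k hk hkS)]
    have key : ∑ k ∈ S, PiTensorProduct.map (fun i => Lapp i (k i) - Lapp i (k i - 1))
          (PiTensorProduct.tprod ℝ f)
        = (PiTensorProduct.tprod ℝ)
            (fun i => ∑ m ∈ Finset.Icc 1 (kstar i),
              (Lapp i m (f i) - Lapp i (m - 1) (f i))) := by
      rw [MultilinearMap.map_sum_finset (PiTensorProduct.tprod ℝ)
        (fun i m => Lapp i m (f i) - Lapp i (m - 1) (f i))
        (fun i => Finset.Icc 1 (kstar i))]
      exact Finset.sum_congr rfl (fun k _ => hterm k)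
    rw [key]
    have hcoord : (fun i => ∑ m ∈ Finset.Icc 1 (kstar i),
        (Lapp i m (f i) - Lapp i (m - 1) (f i))) = fun i => Ltrue i (f i) := by
      funext i
      rw [smolyak_telescope (fun m => Lapp i m (f i)) (kstar i)]
      rw [hzero i]
      simp [hf i]
    rw [hcoord, PiTensorProduct.map_tprod]
  refine ⟨part1, ?_⟩
  intro x hx
  have hx' : x ∈ LinearMap.eqLocus
      (∑ k ∈ K, PiTensorProduct.map (fun i => Lapp i (k i) - Lapp i (k i - 1)))
      (PiTensorProduct.map Ltrue) := by
    refine Submodule.span_le.mpr ?_ hx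
    rintro y ⟨k, hk, f, hf, rfl⟩
    exact part1 k hk f hf
  exact hx'
end

section
/- Let K ⊆ {1,2,…}^d be a finite admissible multi-index set. Then the Smolyak operator admits the combination representation A(K,d,L) = Σ_{k∈K} c_k · (L^{(1)}_{k_1} ⊗ ⋯ ⊗ L^{(d)}_{k_d}), where the integer Smolyak coefficients are c_k = Σ_{z∈{0,1}^d, k+z∈K} (−1)^{‖z‖₁}, the sum being over binary multi-indices z such that k + z ∈ K. -/
open scoped TensorProduct

/-- The integer Smolyak coefficient `c_k = ∑_{z ∈ {0,1}^d, k+z ∈ K} (−1)^{‖z‖₁}`,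
where binary multi-indices `z ∈ {0,1}^d` are encoded as subsets `S ⊆ {1,…,d}`
(so that `‖z‖₁ = |S|` and `k + z = fun i => k i + (if i ∈ S then 1 else 0)`). -/
noncomputable def smolyakCoeff {d : ℕ} (K : Finset (Fin d → ℕ)) (k : Fin d → ℕ) : ℤ :=
  ∑ S ∈ (Finset.univ : Finset (Fin d)).powerset,
    if (fun i => k i + if i ∈ S then 1 else 0) ∈ K then (-1 : ℤ) ^ S.card else 0

/-- For a finite admissible multi-index set `K ⊆ {1,2,…}^d`, the Smolyak
operator `A(K,d,L) = ∑_{k ∈ K} Δ_{k 1} ⊗ ⋯ ⊗ Δ_{k d}` (with `Δ_m = L_m − L_{m−1}` and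
`L_0 = 0`) admits the combination representation
`A(K,d,L) = ∑_{k ∈ K} c_k · (L_{k 1} ⊗ ⋯ ⊗ L_{k d})` with the Smolyak coefficients
`c_k = ∑_{z ∈ {0,1}^d, k+z ∈ K} (−1)^{‖z‖₁}`. -/
theorem smolyak_combination (d : ℕ)
    (V W : Fin d → Type*)
    [∀ i, AddCommGroup (V i)] [∀ i, Module ℝ (V i)]
    [∀ i, AddCommGroup (W i)] [∀ i, Module ℝ (W i)]
    (Lapp : ∀ i, ℕ → (V i →ₗ[ℝ] W i))
    (hzero : ∀ i, Lapp i 0 = 0)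
    (K : Finset (Fin d → ℕ))
    (hpos : ∀ k ∈ K, ∀ i, 1 ≤ k i)
    (hadm : ∀ k ∈ K, ∀ i, 2 ≤ k i → Function.update k i (k i - 1) ∈ K) :
    ∑ k ∈ K, PiTensorProduct.map (fun i => Lapp i (k i) - Lapp i (k i - 1))
      = ∑ k ∈ K, (smolyakCoeff K k : ℝ) •
          PiTensorProduct.map (fun i => Lapp i (k i)) := by
  classical
  -- abbreviation
  set M : (Fin d → ℕ) → ((⨂[ℝ] i, V i) →ₗ[ℝ] ⨂[ℝ] i, W i) :=
    fun j => PiTensorProduct.map (fun i => Lapp i (j i)) with hM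
  -- zero-coordinate vanishing
  have hA : ∀ (j : Fin d → ℕ) (a : Fin d), j a = 0 → M j = 0 := by
    intro j a ha
    apply PiTensorProduct.ext
    ext v
    simp only [LinearMap.compMultilinearMap_apply, PiTensorProduct.map_tprod, hM,
      LinearMap.zero_comp, LinearMap.zero_apply, MultilinearMap.zero_apply]
    exact (PiTensorProduct.tprod ℝ).map_coord_zero a (by simp [ha, hzero])
  -- downward closedness
  have hC : ∀ (S : Finset (Fin d)), ∀ m ∈ K, (∀ i ∈ S, 2 ≤ m i) →
      (fun i => if i ∈ S then m i - 1 else m i) ∈ K := by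
    intro S
    induction S using Finset.induction_on with
    | empty => intro m hm _; simpa using hm
    | @insert a s ha ih =>
      intro m hm h2
      have hm' : (fun i => if i ∈ s then m i - 1 else m i) ∈ K :=
        ih m hm (fun i hi => h2 i (Finset.mem_insert_of_mem hi))
      have h2a : 2 ≤ m a := h2 a (Finset.mem_insert_self a s)
      have := hadm _ hm' a (by simpa [ha] using h2a)
      convert this using 1
      funext i
      by_cases hia : i = a
      · subst hia; simp [Function.update, ha]
      · by_cases his : i ∈ s <;> simp [Function.update, hia, his]
  -- expansion of differences
  have hL : ∀ k : Fin d → ℕ,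
      PiTensorProduct.map (fun i => Lapp i (k i) - Lapp i (k i - 1))
        = ∑ S : Finset (Fin d), (-1 : ℝ) ^ S.card •
            M (fun i => if i ∈ S then k i - 1 else k i) := by
    intro k
    have e1 : (fun i => Lapp i (k i) - Lapp i (k i - 1))
        = (fun i => Lapp i (k i)) + fun i => -Lapp i (k i - 1) := by
      funext i; exact sub_eq_add_neg _ _
    rw [show PiTensorProduct.map (fun i => Lapp i (k i) - Lapp i (k i - 1))
        = PiTensorProduct.mapMultilinear ℝ V W (fun i => Lapp i (k i) - Lapp i (k i - 1))
        from rfl, e1, MultilinearMap.map_add_univ]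
    have key : ∀ S : Finset (Fin d),
        PiTensorProduct.mapMultilinear ℝ V W
          (S.piecewise (fun i => Lapp i (k i)) fun i => -Lapp i (k i - 1))
        = (-1 : ℝ) ^ Sᶜ.card • M (fun i => if i ∈ S then k i else k i - 1) := by
      intro S
      have hpw : S.piecewise (fun i => Lapp i (k i)) (fun i => -Lapp i (k i - 1))
          = fun i => (if i ∈ S then (1 : ℝ) else -1) •
              Lapp i (if i ∈ S then k i else k i - 1) := by
        funext i
        by_cases hi : i ∈ S <;> simp [Finset.piecewise, hi]
      rw [hpw, MultilinearMap.map_smul_univ]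
      congr 1
      · rw [← Finset.prod_mul_prod_compl S]
        rw [Finset.prod_congr rfl (fun i hi => if_pos hi),
          Finset.prod_congr rfl (fun i hi => if_neg (Finset.mem_compl.mp hi))]
        simp
    rw [Finset.sum_congr rfl (fun S _ => key S)]
    -- reindex by complement
    exact Fintype.sum_bijective compl (Function.Involutive.bijective compl_compl)
      _ _ (fun S => by simp)
  -- rewrite RHS coefficient
  have hR : ∀ k : Fin d → ℕ, (smolyakCoeff K k : ℝ) • M k
      = ∑ S : Finset (Fin d),
          if (fun i => k i + if i ∈ S then 1 else 0) ∈ K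
          then (-1 : ℝ) ^ S.card • M k else 0 := by
    intro k
    rw [smolyakCoeff, Finset.powerset_univ]
    push_cast
    rw [Finset.sum_smul]
    refine Finset.sum_congr rfl fun S _ => ?_
    split_ifs <;> simp
  -- LHS summand with membership indicator
  have hF : ∀ k ∈ K, ∀ S : Finset (Fin d),
      (-1 : ℝ) ^ S.card • M (fun i => if i ∈ S then k i - 1 else k i)
        = if (fun i => if i ∈ S then k i - 1 else k i) ∈ K
          then (-1 : ℝ) ^ S.card • M (fun i => if i ∈ S then k i - 1 else k i) else 0 := by
    intro k hk S
    split_ifs with h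
    · rfl
    · by_cases h2 : ∀ i ∈ S, 2 ≤ k i
      · exact absurd (hC S k hk h2) h
      · push_neg at h2
        obtain ⟨a, haS, hlt⟩ := h2
        have hk1 : k a = 1 := le_antisymm (by omega) (hpos k hk a)
        rw [hA _ a (by simp [haS, hk1]), smul_zero]
  rw [Finset.sum_congr rfl (fun k _ => hL k), Finset.sum_congr rfl (fun k _ => hR k)]
  have step1 : ∑ k ∈ K, ∑ S : Finset (Fin d),
      (-1 : ℝ) ^ S.card • M (fun i => if i ∈ S then k i - 1 else k i)
      = ∑ p ∈ (K ×ˢ (Finset.univ : Finset (Finset (Fin d)))).filter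
          (fun p => (fun i => if i ∈ p.2 then p.1 i - 1 else p.1 i) ∈ K),
          (-1 : ℝ) ^ p.2.card • M (fun i => if i ∈ p.2 then p.1 i - 1 else p.1 i) := by
    rw [Finset.sum_filter, Finset.sum_product]
    exact Finset.sum_congr rfl fun k hk => Finset.sum_congr rfl fun S _ => hF k hk S
  have step3 : ∑ p ∈ (K ×ˢ (Finset.univ : Finset (Finset (Fin d)))).filter
          (fun p => (fun i => p.1 i + if i ∈ p.2 then 1 else 0) ∈ K),
          (-1 : ℝ) ^ p.2.card • M p.1
      = ∑ k ∈ K, ∑ S : Finset (Fin d),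
          if (fun i => k i + if i ∈ S then 1 else 0) ∈ K
          then (-1 : ℝ) ^ S.card • M k else 0 := by
    rw [Finset.sum_filter, Finset.sum_product]
  rw [step1, ← step3]
  refine Finset.sum_nbij'
    (fun p => ((fun i => if i ∈ p.2 then p.1 i - 1 else p.1 i), p.2))
    (fun p => ((fun i => p.1 i + if i ∈ p.2 then 1 else 0), p.2))
    ?_ ?_ ?_ ?_ ?_
  · intro p hp
    simp only [Finset.mem_filter, Finset.mem_product, Finset.mem_univ, and_true] at hp ⊢
    obtain ⟨hp1, hp2⟩ := hp
    refine ⟨hp2, ?_⟩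
    have heq : (fun i => (if i ∈ p.2 then p.1 i - 1 else p.1 i)
        + if i ∈ p.2 then 1 else 0) = p.1 := by
      funext i
      have := hpos p.1 hp1 i
      by_cases hi : i ∈ p.2 <;> simp [hi] <;> omega
    rw [heq]; exact hp1
  · intro p hp
    simp only [Finset.mem_filter, Finset.mem_product, Finset.mem_univ, and_true] at hp ⊢
    obtain ⟨hp1, hp2⟩ := hp
    refine ⟨hp2, ?_⟩
    have heq : (fun i => (if i ∈ p.2 then (p.1 i + if i ∈ p.2 then 1 else 0) - 1
        else p.1 i + if i ∈ p.2 then 1 else 0)) = p.1 := by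
      funext i
      by_cases hi : i ∈ p.2 <;> simp [hi]
    rw [heq]; exact hp1
  · intro p hp
    simp only [Finset.mem_filter, Finset.mem_product, Finset.mem_univ, and_true] at hp
    obtain ⟨hp1, hp2⟩ := hp
    ext i
    · have := hpos p.1 hp1 i
      by_cases hi : i ∈ p.2 <;> simp [hi] <;> omega
    · simp
  · intro p hp
    ext i
    · by_cases hi : i ∈ p.2 <;> simp [hi]
    · simp
  · intro p hp
    rfl
end

section
/- Consider, for each dimension l = 1,…,d, a measure μ_l on ℝ with all polynomial moments finite, an orthonormal polynomial family (ψ^{(l)}_n)_{n≥0} for μ_l, and for each level m ≥ 1 a quadrature rule Q^{(l)}_m that is exact of degree 2m − 1 for μ_l (e.g., the m-point Gaussian rule). Let n ≥ d and let A be the Smolyak quadrature built over the isotropic total-order multi-index set K = {k ∈ {1,2,…}^d : Σ_l k_l ≤ n}. Let j and j′ be multi-indices each included in the half-exact set of A, i.e., for each of j and j′ there exists k ∈ K with j_l ≤ k_l − 1 for all l (equivalently Σ_l j_l ≤ n − d, and likewise for j′). Then A integrates the product of the two corresponding basis polynomials exactly: A(Ψ_j Ψ_{j′}) = ∫ Ψ_j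 Ψ_{j′} d(μ_1 ⊗ ⋯ ⊗ μ_d), which equals 1 if j = j′ and 0 otherwise. (Hence direct quadrature with this Smolyak rule and this basis has no internal aliasing.) -/
open MeasureTheory

/-- The tensor quadrature `Q_k = Q^{(1)}_{k 1} ⊗ ⋯ ⊗ Q^{(d)}_{k d}` acting on a function
`f : ℝ^d → ℝ` by summing over the product node grid with product weights.  Here
`N l m` is the number of points of the level-`m` rule in dimension `l`, with nodes
`x l m` and weights `w l m`. -/
noncomputable def tensorQuad {d : ℕ} (N : Fin d → ℕ → ℕ)
    (x w : ∀ (l : Fin d) (m : ℕ), Fin (N l m) → ℝ)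
    (k : Fin d → ℕ) (f : (Fin d → ℝ) → ℝ) : ℝ :=
  ∑ i : ∀ l, Fin (N l (k l)),
    (∏ l, w l (k l) (i l)) * f (fun l => x l (k l) (i l))

/-- The multivariate basis polynomial `Ψ_j(x) = ∏ l, ψ^{(l)}_{j l}(x l)`. -/
noncomputable def multiPsi {d : ℕ} (ψ : Fin d → ℕ → Polynomial ℝ) (j : Fin d → ℕ) :
    (Fin d → ℝ) → ℝ :=
  fun y => ∏ l, (ψ l (j l)).eval (y l)

/-! Apply the Smolyak rule to the product `Ψ_j Ψ_{j'} = ∏ l, P_l` with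
`P_l = ψ_{j l} ψ_{j' l}`. Each univariate rule `Q_m` integrates `P_l` exactly once
`2m - 1 ≥ j l + j' l`, so the differences `Δ_m P_l` vanish beyond the level
`M l = (j l + j' l) / 2 + 1`. Writing `A = ∑_{k ∈ K} ⊗ Δ_{k l}`, the sum therefore reduces to the
box `[1, M]`, where it telescopes to `∏ l, ∫ P_l dμ_l`; the box lies in `K` because
`2 ∑ M l ≤ ∑ (j l + 1) + ∑ (j' l + 1) ≤ 2n`. Orthonormality evaluates the product as `δ_{j j'}`. -/

open Finset Polynomial

theorem Finset.sum_Icc_one_sub_pred {G : Type*} [AddCommGroup G] (f : ℕ → G) (M : ℕ) :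
    ∑ m ∈ Icc 1 M, (f m - f (m - 1)) = f M - f 0 := by
  induction M with
  | zero => simp
  | succ M ih => rw [sum_Icc_succ_top (by omega), ih, Nat.add_sub_cancel]; abel

section SmolyakCombination

variable {R : Type*} [CommRing R] {d : ℕ} {K : Finset (Fin d → ℕ)}

theorem sum_ite_add_mem_eq_sum_tsub (hdown : ∀ k ∈ K, ∀ k', 1 ≤ k' → k' ≤ k → k' ∈ K)
    (F : (Fin d → ℕ) → R) (hF : ∀ k, F k ≠ 0 → 1 ≤ k) (e : Fin d → ℕ) :
    ∑ k ∈ K, (if k + e ∈ K then F k else 0) = ∑ k ∈ K, F (k - e) := by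
  have hmem : ∀ k, (if k + e ∈ K then F k else 0) ≠ 0 → k + e ∈ K := fun k hk => by
    by_contra h; exact hk (if_neg h)
  refine sum_bij_ne_zero (fun k _ _ => k + e) (fun k _ hk => hmem k hk)
    (fun _ _ _ _ _ _ h => add_right_cancel h) (fun b hb hFb => ?_) (fun k _ hk => ?_)
  · have hpos : 1 ≤ b - e := hF _ hFb
    have heb : e ≤ b := fun l => (Nat.sub_pos_iff_lt.mp (hpos l)).le
    refine ⟨b - e, hdown b hb _ hpos tsub_le_self, ?_, tsub_add_cancel_of_le heb⟩
    rwa [tsub_add_cancel_of_le heb, if_pos hb]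
  · rw [if_pos (hmem k hk), add_tsub_cancel_right]

theorem sum_smolyakCoeff_mul_prod (hdown : ∀ k ∈ K, ∀ k', 1 ≤ k' → k' ≤ k → k' ∈ K)
    (a : Fin d → ℕ → R) (ha0 : ∀ l, a l 0 = 0) :
    ∑ k ∈ K, (smolyakCoeff K k : R) * ∏ l, a l (k l)
      = ∑ k ∈ K, ∏ l, (a l (k l) - a l (k l - 1)) := by
  -- Expand each product over the subsets `S` of coordinates and shift `k ↦ k + 1_S`; the shifted
  -- terms that leave the positive orthant vanish because `a l 0 = 0`.
  have hF : ∀ k : Fin d → ℕ, ∏ l, a l (k l) ≠ 0 → 1 ≤ k := fun k hk l =>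
    Nat.one_le_iff_ne_zero.mpr fun h0 => hk (prod_eq_zero (mem_univ l) (by rw [h0, ha0]))
  have hexpand : ∀ k : Fin d → ℕ, ∏ l, (a l (k l) - a l (k l - 1))
      = ∑ S ∈ univ.powerset, (-1) ^ #S *
          ∏ l, a l (k l - if l ∈ S then 1 else 0) := fun k => by
    rw [prod_sub]
    refine sum_congr rfl fun S _ => ?_
    rw [mul_assoc, ← compl_eq_univ_sdiff, mul_comm (∏ i ∈ Sᶜ, _), ← prod_mul_prod_compl S]
    congr 2 <;> refine prod_congr rfl fun l hl => ?_
    · simp [hl]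
    · simp [mem_compl.mp hl]
  simp only [hexpand, smolyakCoeff, Int.cast_sum, sum_mul]
  rw [sum_comm, sum_comm (s := K)]
  refine sum_congr rfl fun S _ => ?_
  calc _ = ((-1) ^ #S : R) * ∑ k ∈ K,
          (if (fun i => k i + if i ∈ S then 1 else 0) ∈ K then ∏ l, a l (k l) else 0) := by
        rw [mul_sum]
        refine sum_congr rfl fun k _ => ?_
        split_ifs <;> simp
    _ = _ := by
      rw [← mul_sum]
      exact congrArg _ (sum_ite_add_mem_eq_sum_tsub hdown _ hF fun i => if i ∈ S then 1 else 0)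

theorem sum_prod_sub_eq_prod_of_piFinset_subset (M : Fin d → ℕ)
    (hbox : Fintype.piFinset (fun l => Icc 1 (M l)) ⊆ K)
    (a : Fin d → ℕ → R) (ha0 : ∀ l, a l 0 = 0) (hstab : ∀ l m, M l ≤ m → a l m = a l (M l)) :
    ∑ k ∈ K, ∏ l, (a l (k l) - a l (k l - 1)) = ∏ l, a l (M l) := by
  rw [← sum_subset hbox, ← prod_univ_sum (fun l => Icc 1 (M l)) fun l m => a l m - a l (m - 1)]
  · simp only [sum_Icc_one_sub_pred, ha0, sub_zero]
  · intro k _ hk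
    obtain ⟨l, hl⟩ : ∃ l, k l ∉ Icc 1 (M l) := by simpa [Fintype.mem_piFinset] using hk
    refine prod_eq_zero (mem_univ l) (sub_eq_zero.mpr ?_)
    rcases Nat.eq_zero_or_pos (k l) with h | h
    · rw [h] -- `0 - 1 = 0` in `ℕ`
    · rw [mem_Icc] at hl
      rw [hstab l (k l) (by omega), hstab l (k l - 1) (by omega)]

end SmolyakCombination

theorem mem_of_le_of_mem_totalOrder {d n : ℕ} {K : Finset (Fin d → ℕ)}
    (hK : ∀ k : Fin d → ℕ, k ∈ K ↔ ((∀ l, 1 ≤ k l) ∧ ∑ l, k l ≤ n))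
    {k k' : Fin d → ℕ} (hk : k ∈ K) (h1 : 1 ≤ k') (hle : k' ≤ k) : k' ∈ K :=
  (hK k').2 ⟨h1, (sum_le_sum fun l _ => hle l).trans ((hK k).1 hk).2⟩

theorem piFinset_Icc_subset_totalOrder {d n : ℕ} {K : Finset (Fin d → ℕ)}
    (hK : ∀ k : Fin d → ℕ, k ∈ K ↔ ((∀ l, 1 ≤ k l) ∧ ∑ l, k l ≤ n))
    {M : Fin d → ℕ} (hM : ∑ l, M l ≤ n) : Fintype.piFinset (fun l => Icc 1 (M l)) ⊆ K :=
  fun k hk => by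
    simp only [Fintype.mem_piFinset, mem_Icc] at hk
    exact (hK k).2 ⟨fun l => (hk l).1, (sum_le_sum fun l _ => (hk l).2).trans hM⟩

theorem tensorQuad_prod {d : ℕ} (N : Fin d → ℕ → ℕ) (x w : ∀ (l : Fin d) (m : ℕ), Fin (N l m) → ℝ)
    (k : Fin d → ℕ) (g : Fin d → ℝ → ℝ) :
    tensorQuad N x w k (fun y => ∏ l, g l (y l)) = ∏ l, ∑ i, w l (k l) i * g l (x l (k l) i) := by
  rw [tensorQuad, prod_univ_sum, Fintype.piFinset_univ]
  exact sum_congr rfl fun i _ => prod_mul_distrib.symm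

theorem Fintype.prod_boole_apply_eq {ι α M₀ : Type*} [Fintype ι] [DecidableEq α]
    [DecidableEq (ι → α)] [CommMonoidWithZero M₀] (j j' : ι → α) :
    ∏ i, (if j i = j' i then 1 else 0 : M₀) = if j = j' then 1 else 0 := by
  rw [Fintype.prod_boole]
  exact if_congr funext_iff.symm rfl rfl

theorem multiPsi_mul_multiPsi {d : ℕ} (ψ : Fin d → ℕ → ℝ[X]) (j j' : Fin d → ℕ) (y : Fin d → ℝ) :
    multiPsi ψ j y * multiPsi ψ j' y = ∏ l, (ψ l (j l) * ψ l (j' l)).eval (y l) := by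
  simp only [multiPsi, eval_mul, prod_mul_distrib]

theorem integral_multiPsi_mul_multiPsi {d : ℕ} {μ : Fin d → Measure ℝ} [∀ l, SigmaFinite (μ l)]
    {ψ : Fin d → ℕ → ℝ[X]}
    (horth : ∀ l m m', ∫ t, (ψ l m).eval t * (ψ l m').eval t ∂(μ l) = if m = m' then 1 else 0)
    (j j' : Fin d → ℕ) :
    ∫ y, multiPsi ψ j y * multiPsi ψ j' y ∂(Measure.pi μ) = if j = j' then 1 else 0 := by
  simp only [multiPsi_mul_multiPsi]
  rw [integral_fintype_prod_eq_prod (fun l t => (ψ l (j l) * ψ l (j' l)).eval t)]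
  simp only [eval_mul, horth, Fintype.prod_boole_apply_eq]

theorem sum_mul_eval_mul_eq_ite_of_exact {μ : Measure ℝ} {ψ : ℕ → ℝ[X]}
    (hdeg : ∀ m, (ψ m).natDegree ≤ m)
    (horth : ∀ m m', ∫ t, (ψ m).eval t * (ψ m').eval t ∂μ = if m = m' then 1 else 0)
    {N : ℕ} (x w : Fin N → ℝ) {e : ℕ}
    (hexact : ∀ p : ℝ[X], p.natDegree ≤ e → ∑ i, w i * p.eval (x i) = ∫ t, p.eval t ∂μ)
    {m m' : ℕ} (h : m + m' ≤ e) :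
    ∑ i, w i * (ψ m * ψ m').eval (x i) = if m = m' then 1 else 0 := by
  rw [hexact _ (natDegree_mul_le.trans ((add_le_add (hdeg m) (hdeg m')).trans h))]
  simpa only [eval_mul] using horth m m'

theorem sum_half_add_one_le {d n : ℕ} {j j' : Fin d → ℕ} (hj : ∑ l, (j l + 1) ≤ n)
    (hj' : ∑ l, (j' l + 1) ≤ n) : ∑ l, ((j l + j' l) / 2 + 1) ≤ n := by
  have : 2 * ∑ l, ((j l + j' l) / 2 + 1) ≤ ∑ l, (j l + 1) + ∑ l, (j' l + 1) := by
    rw [mul_sum, ← sum_add_distrib]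
    exact sum_le_sum fun l _ => by omega
  omega

theorem smolyak_total_order_no_internal_aliasing_general (d n : ℕ)
    (μ : Fin d → Measure ℝ) [∀ l, SigmaFinite (μ l)]
    (ψ : Fin d → ℕ → Polynomial ℝ)
    (hdeg : ∀ l m, (ψ l m).natDegree = m)
    (horth : ∀ l m m',
      ∫ t, (ψ l m).eval t * (ψ l m').eval t ∂(μ l) = if m = m' then 1 else 0)
    (N : Fin d → ℕ → ℕ) (x w : ∀ (l : Fin d) (m : ℕ), Fin (N l m) → ℝ)
    (hexact : ∀ (l : Fin d) (m : ℕ), 1 ≤ m → ∀ p : Polynomial ℝ,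
      p.natDegree ≤ 2 * m - 1 →
      ∑ i, w l m i * p.eval (x l m i) = ∫ t, p.eval t ∂(μ l))
    (K : Finset (Fin d → ℕ))
    (hK : ∀ k : Fin d → ℕ, k ∈ K ↔ ((∀ l, 1 ≤ k l) ∧ ∑ l, k l ≤ n))
    (j j' : Fin d → ℕ)
    (hj : ∃ k ∈ K, ∀ l, j l + 1 ≤ k l)
    (hj' : ∃ k ∈ K, ∀ l, j' l + 1 ≤ k l) :
    (∑ k ∈ K, (smolyakCoeff K k : ℝ) *
        tensorQuad N x w k (fun y => multiPsi ψ j y * multiPsi ψ j' y))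
      = ∫ y, multiPsi ψ j y * multiPsi ψ j' y ∂(Measure.pi μ) ∧
    (∫ y, multiPsi ψ j y * multiPsi ψ j' y ∂(Measure.pi μ))
      = if j = j' then 1 else 0 := by
  -- `a l m` is `Q^{(l)}_m (P_l)`, with `Q^{(l)}_0 := 0` as in the definition of `Δ`.
  set a : Fin d → ℕ → ℝ := fun l m =>
    if m = 0 then 0 else ∑ i, w l m i * (ψ l (j l) * ψ l (j' l)).eval (x l m i)
  set M : Fin d → ℕ := fun l => (j l + j' l) / 2 + 1
  have ha : ∀ l m, M l ≤ m → a l m = if j l = j' l then 1 else 0 := fun l m hm => by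
    have hm : (j l + j' l) / 2 + 1 ≤ m := hm
    simp only [a, if_neg (show m ≠ 0 by omega)]
    exact sum_mul_eval_mul_eq_ite_of_exact (fun m => (hdeg l m).le) (horth l) _ _
      (hexact l m (by omega)) (by omega)
  have hquad : ∀ k ∈ K, tensorQuad N x w k (fun y => multiPsi ψ j y * multiPsi ψ j' y)
      = ∏ l, a l (k l) := fun k hk => by
    simp only [multiPsi_mul_multiPsi]
    rw [tensorQuad_prod N x w k fun l t => (ψ l (j l) * ψ l (j' l)).eval t]
    exact prod_congr rfl fun l _ => (if_neg (Nat.one_le_iff_ne_zero.mp (((hK k).1 hk).1 l))).symm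
  have hsum : ∀ q : Fin d → ℕ, (∃ k ∈ K, ∀ l, q l + 1 ≤ k l) → ∑ l, (q l + 1) ≤ n :=
    fun q ⟨k, hk, hqk⟩ => (sum_le_sum fun l _ => hqk l).trans ((hK k).1 hk).2
  have hbox := piFinset_Icc_subset_totalOrder hK (sum_half_add_one_le (hsum j hj) (hsum j' hj'))
  rw [integral_multiPsi_mul_multiPsi horth, sum_congr rfl fun k hk => by rw [hquad k hk],
    sum_smolyakCoeff_mul_prod (fun _ hk _ => mem_of_le_of_mem_totalOrder hK hk) a
      fun l => if_pos rfl,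
    sum_prod_sub_eq_prod_of_piFinset_subset M hbox a (fun l => if_pos rfl)
      fun l m hm => by rw [ha l m hm, ha l _ le_rfl]]
  simp only [ha _ _ le_rfl, Fintype.prod_boole_apply_eq, and_self]

/-- For each dimension `l` let `μ l` be a measure on `ℝ` with all
polynomial moments finite, `ψ l` an orthonormal polynomial family for `μ l`, and
`Q^{(l)}_m` (nodes `x l m`, weights `w l m`) exact of degree `2m − 1` for `μ l`.  Let
`A = ∑_{k ∈ K} c_k Q_k` be the Smolyak quadrature over the isotropic total-order set
`K = {k ∈ {1,2,…}^d : ∑ k l ≤ n}` with `n ≥ d`.  If `j` and `j'` are each included in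
the half-exact set of `A` (there is `k ∈ K` with `j l ≤ k l − 1` for all `l`, and
likewise for `j'`), then `A` integrates `Ψ_j Ψ_{j'}` exactly, and the exact integral is
`1` if `j = j'` and `0` otherwise (no internal aliasing for direct quadrature with this
rule and basis). -/
theorem smolyak_total_order_no_internal_aliasing (d n : ℕ) (hd : 1 ≤ d) (hn : d ≤ n)
    (μ : Fin d → Measure ℝ) [∀ l, SigmaFinite (μ l)]
    (hmom : ∀ l (m : ℕ), Integrable (fun t => t ^ m) (μ l))
    (ψ : Fin d → ℕ → Polynomial ℝ)
    (hdeg : ∀ l m, (ψ l m).natDegree = m)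
    (horth : ∀ l m m',
      ∫ t, (ψ l m).eval t * (ψ l m').eval t ∂(μ l) = if m = m' then 1 else 0)
    (N : Fin d → ℕ → ℕ) (x w : ∀ (l : Fin d) (m : ℕ), Fin (N l m) → ℝ)
    (hexact : ∀ (l : Fin d) (m : ℕ), 1 ≤ m → ∀ p : Polynomial ℝ,
      p.natDegree ≤ 2 * m - 1 →
      ∑ i, w l m i * p.eval (x l m i) = ∫ t, p.eval t ∂(μ l))
    (K : Finset (Fin d → ℕ))
    (hK : ∀ k : Fin d → ℕ, k ∈ K ↔ ((∀ l, 1 ≤ k l) ∧ ∑ l, k l ≤ n))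
    (j j' : Fin d → ℕ)
    (hj : ∃ k ∈ K, ∀ l, j l + 1 ≤ k l)
    (hj' : ∃ k ∈ K, ∀ l, j' l + 1 ≤ k l) :
    (∑ k ∈ K, (smolyakCoeff K k : ℝ) *
        tensorQuad N x w k (fun y => multiPsi ψ j y * multiPsi ψ j' y))
      = ∫ y, multiPsi ψ j y * multiPsi ψ j' y ∂(Measure.pi μ) ∧
    (∫ y, multiPsi ψ j y * multiPsi ψ j' y ∂(Measure.pi μ))
      = if j = j' then 1 else 0 :=
  smolyak_total_order_no_internal_aliasing_general d n μ ψ hdeg horth N x w hexact K hK j j' hj hj'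
end

section
/- Let μ be a measure on ℝ with all polynomial moments finite, let (ψ_n)_{n≥0} be an orthonormal polynomial family for μ, and let Q be a quadrature rule exact of degree a for μ. Set q := ⌊a/2⌋ and define the pseudospectral approximation S(f) := Σ_{j=0}^{q} Q(f ψ_j) ψ_j. Then S has no internal aliasing: S is exact on its range, i.e., for every real polynomial p with deg p ≤ q, S(p) = p (as polynomials). -/
open MeasureTheory

private lemma integrable_eval_poly (μ : Measure ℝ)
    (hmom : ∀ n : ℕ, Integrable (fun t => t ^ n) μ) (p : Polynomial ℝ) :
    Integrable (fun t => p.eval t) μ := by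
  have h : (fun t : ℝ => p.eval t) = fun t =>
      ∑ i ∈ Finset.range (p.natDegree + 1), p.coeff i * t ^ i := by
    funext t; exact p.eval_eq_sum_range t
  rw [h]
  exact integrable_finset_sum _ (fun i _ => (hmom i).const_mul _)

private lemma span_psi (ψ : ℕ → Polynomial ℝ)
    (hdeg : ∀ n, (ψ n).natDegree = n) (hψ0 : ψ 0 ≠ 0) :
    ∀ m, ∀ p : Polynomial ℝ, p.natDegree ≤ m →
      ∃ c : ℕ → ℝ, p = ∑ j ∈ Finset.range (m + 1), c j • ψ j := by
  intro m
  induction m with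
  | zero =>
    intro p hp
    have h0 : (ψ 0).coeff 0 ≠ 0 := by
      have := Polynomial.leadingCoeff_ne_zero.mpr hψ0
      rwa [Polynomial.leadingCoeff, hdeg 0] at this
    refine ⟨fun _ => p.coeff 0 / (ψ 0).coeff 0, ?_⟩
    have hpc : p = Polynomial.C (p.coeff 0) := p.eq_C_of_natDegree_le_zero hp
    have hψc : ψ 0 = Polynomial.C ((ψ 0).coeff 0) :=
      (ψ 0).eq_C_of_natDegree_le_zero (le_of_eq (hdeg 0))
    rw [Finset.sum_range_one, hψc, Polynomial.smul_C]
    simp only [Polynomial.coeff_C_zero, smul_eq_mul]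
    rw [div_mul_cancel₀ _ h0]
    exact hpc
  | succ m ih =>
    intro p hp
    have hψne : (ψ (m + 1)).coeff (m + 1) ≠ 0 := by
      have h1 : ψ (m + 1) ≠ 0 := by
        intro h
        have := hdeg (m + 1)
        rw [h] at this
        simp at this
      have := Polynomial.leadingCoeff_ne_zero.mpr h1
      rwa [Polynomial.leadingCoeff, hdeg (m + 1)] at this
    set d := p.coeff (m + 1) / (ψ (m + 1)).coeff (m + 1) with hd
    have hsub : (p - d • ψ (m + 1)).natDegree ≤ m + 1 := by
      refine le_trans (Polynomial.natDegree_sub_le _ _) ?_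
      simp only [max_le_iff]
      refine ⟨hp, ?_⟩
      refine le_trans (Polynomial.natDegree_smul_le _ _) (le_of_eq (hdeg _))
    have hcoeff : (p - d • ψ (m + 1)).coeff (m + 1) = 0 := by
      simp [Polynomial.coeff_sub, hd, div_mul_cancel₀ _ hψne]
    have hr : (p - d • ψ (m + 1)).natDegree ≤ m := by
      rw [Polynomial.natDegree_le_iff_coeff_eq_zero]
      intro N hN
      rcases eq_or_lt_of_le (Nat.succ_le_of_lt hN) with h | h
      · rw [← h]; exact hcoeff
      · exact Polynomial.coeff_eq_zero_of_natDegree_lt (lt_of_le_of_lt hsub h)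
    obtain ⟨c, hc⟩ := ih _ hr
    refine ⟨fun j => if j = m + 1 then d else c j, ?_⟩
    show p = ∑ j ∈ Finset.range (m + 1 + 1), (if j = m + 1 then d else c j) • ψ j
    rw [Finset.sum_range_succ, if_pos rfl]
    have heq : ∑ j ∈ Finset.range (m + 1), (if j = m + 1 then d else c j) • ψ j
        = ∑ j ∈ Finset.range (m + 1), c j • ψ j := by
      refine Finset.sum_congr rfl fun j hj => ?_
      have := Finset.mem_range.mp hj
      rw [if_neg (by omega)]
    rw [heq, ← hc]
    abel

/-- Let `μ` be a measure on `ℝ` with all polynomial moments finite,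
`(ψ n)` an orthonormal polynomial family for `μ`, and `Q` a quadrature rule (nodes `x`,
weights `w`) exact of degree `a` for `μ`.  With `q = ⌊a/2⌋`, the pseudospectral
approximation `S(f) = ∑_{j=0}^{q} Q(f ψ_j) ψ_j` has no internal aliasing: it is
exact on its range, i.e. `S(p) = p` (as polynomials) for every real polynomial `p`
with `deg p ≤ q`. -/
theorem pseudospectral_no_internal_aliasing_1d
    (μ : Measure ℝ)
    (hmom : ∀ n : ℕ, Integrable (fun t => t ^ n) μ)
    (ψ : ℕ → Polynomial ℝ)
    (hdeg : ∀ n, (ψ n).natDegree = n)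
    (horth : ∀ m n, ∫ t, (ψ m).eval t * (ψ n).eval t ∂μ = if m = n then 1 else 0)
    (N : ℕ) (x w : Fin N → ℝ) (a : ℕ)
    (hexact : ∀ p : Polynomial ℝ, p.natDegree ≤ a →
      ∑ i, w i * p.eval (x i) = ∫ t, p.eval t ∂μ) :
    ∀ p : Polynomial ℝ, p.natDegree ≤ a / 2 →
      (∑ j ∈ Finset.range (a / 2 + 1),
        (∑ i, w i * (p.eval (x i) * (ψ j).eval (x i))) • ψ j) = p := by
  intro p hp
  have hψ0 : ψ 0 ≠ 0 := by
    intro h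
    have h00 := horth 0 0
    simp [h] at h00
  obtain ⟨c, hc⟩ := span_psi ψ hdeg hψ0 (a / 2) p hp
  have key : ∀ j ∈ Finset.range (a / 2 + 1),
      (∑ i, w i * (p.eval (x i) * (ψ j).eval (x i))) = c j := by
    intro j hj
    have hj' : j ≤ a / 2 := Nat.lt_succ_iff.mp (Finset.mem_range.mp hj)
    have hmul : (p * ψ j).natDegree ≤ a := by
      refine le_trans (Polynomial.natDegree_mul_le) ?_
      have h1 := hdeg j
      omega
    have h1 := hexact (p * ψ j) hmul
    simp only [Polynomial.eval_mul] at h1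
    rw [h1]
    have hpt : ∀ t : ℝ, p.eval t * (ψ j).eval t
        = ∑ k ∈ Finset.range (a / 2 + 1), c k * ((ψ k).eval t * (ψ j).eval t) := by
      intro t
      rw [hc, Polynomial.eval_finset_sum, Finset.sum_mul]
      refine Finset.sum_congr rfl fun k _ => ?_
      simp [Polynomial.eval_smul, smul_eq_mul, mul_assoc]
    calc ∫ t, p.eval t * (ψ j).eval t ∂μ
        = ∫ t, ∑ k ∈ Finset.range (a / 2 + 1),
            c k * ((ψ k).eval t * (ψ j).eval t) ∂μ := by simp_rw [hpt]
      _ = ∑ k ∈ Finset.range (a / 2 + 1),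
            ∫ t, c k * ((ψ k).eval t * (ψ j).eval t) ∂μ := by
          refine integral_finset_sum _ fun k _ => ?_
          have := (integrable_eval_poly μ hmom (ψ k * ψ j)).const_mul (c k)
          simpa [Polynomial.eval_mul] using this
      _ = ∑ k ∈ Finset.range (a / 2 + 1), c k * (if k = j then 1 else 0) := by
          refine Finset.sum_congr rfl fun k _ => ?_
          rw [integral_const_mul, horth k j]
      _ = c j := by
          rw [Finset.sum_eq_single j]
          · simp
          · intro k _ hk; simp [hk]
          · intro h; exact absurd hj h
  calc (∑ j ∈ Finset.range (a / 2 + 1),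
        (∑ i, w i * (p.eval (x i) * (ψ j).eval (x i))) • ψ j)
      = ∑ j ∈ Finset.range (a / 2 + 1), c j • ψ j := by
        refine Finset.sum_congr rfl fun j hj => ?_
        rw [key j hj]
    _ = p := hc.symm
end

section
/- For each i = 1,…,d let V_i be a real vector space and (S^{(i)}_m)_{m≥0} linear endomorphisms of V_i with S^{(i)}_0 = 0, and suppose the fixed-point (exact) sets E^{(i)}_m := {x ∈ V_i : S^{(i)}_m x = x} are nested: E^{(i)}_m ⊆ E^{(i)}_{m′} for m ≤ m′. Let K ⊆ {1,2,…}^d be a finite admissible multi-index set and let A(K) := Σ_{k∈K} Δ^{(1)}_{k_1} ⊗ ⋯ ⊗ Δ^{(d)}_{k_d} be the Smolyak operator, where Δ^{(i)}_m := S^{(i)}_m − S^{(i)}_{m−1}. Then A(K) has no internal aliasing: A(K) x = x for every x in the span of the elementary tensors x_1 ⊗ ⋯ ⊗ x_d for which there exists k ∈ K with x_i ∈ E^{(i)}_{k_i} for all i. -/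
open scoped TensorProduct

/-- Downward closure: an admissible set contains the whole box below any member. -/
lemma smolyak_box_mem (d : ℕ) (K : Finset (Fin d → ℕ))
    (hadm : ∀ k ∈ K, ∀ i, 2 ≤ k i → Function.update k i (k i - 1) ∈ K) :
    ∀ n : ℕ, ∀ k₀ ∈ K, ∀ k : Fin d → ℕ, (∀ i, 1 ≤ k i) → (∀ i, k i ≤ k₀ i) →
      (∑ i, (k₀ i - k i)) = n → k ∈ K := by
  intro n
  induction n with
  | zero =>
    intro k₀ hk₀ k h1 hle hsum
    have : k = k₀ := funext fun i => by
      have := Finset.sum_eq_zero_iff.mp hsum i (Finset.mem_univ i)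
      have := hle i
      omega
    exact this ▸ hk₀
  | succ n ih =>
    intro k₀ hk₀ k h1 hle hsum
    have hex : ∃ i, k i < k₀ i := by
      by_contra h
      push_neg at h
      have hz : ∀ i ∈ Finset.univ, k₀ i - k i = 0 := fun i _ => by
        have := h i; omega
      rw [Finset.sum_congr rfl hz] at hsum
      simp at hsum
    obtain ⟨i, hi⟩ := hex
    have h2 : 2 ≤ k₀ i := by have := h1 i; omega
    have hk₀' := hadm k₀ hk₀ i h2
    refine ih _ hk₀' k h1 ?_ ?_
    · intro j
      rcases eq_or_ne j i with rfl | hj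
      · simp only [Function.update_self]; omega
      · simp only [Function.update_of_ne hj]; exact hle j
    · have hsplit : ∀ g : Fin d → ℕ, ∑ j, g j = ∑ j ∈ Finset.univ \ {i}, g j + g i := by
        intro g
        rw [Finset.sum_eq_sum_sdiff_singleton_add (Finset.mem_univ i)]
      rw [hsplit] at hsum ⊢
      have hcong : ∑ j ∈ Finset.univ \ {i}, (Function.update k₀ i (k₀ i - 1) j - k j)
          = ∑ j ∈ Finset.univ \ {i}, (k₀ j - k j) := by
        refine Finset.sum_congr rfl fun j hj => ?_
        have hj' : j ≠ i := by simpa using (Finset.mem_sdiff.mp hj).2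
        rw [Function.update_of_ne hj']
      rw [hcong, Function.update_self]
      omega

/-- For each `i` let `V i` be a real vector space and `S i m`
linear endomorphisms with `S i 0 = 0`, whose fixed-point (exact) sets
`E^{(i)}_m = {x : S i m x = x}` are nested in `m`.  For a finite admissible multi-index
set `K ⊆ {1,2,…}^d`, the Smolyak operator
`A(K) = ∑_{k ∈ K} Δ_{k 1} ⊗ ⋯ ⊗ Δ_{k d}` (with `Δ_m = S_m − S_{m−1}`) has no internal
aliasing: `A(K) x = x` for every `x` in the span of the elementary tensors
`x_1 ⊗ ⋯ ⊗ x_d` for which there exists `k ∈ K` with `x_i ∈ E^{(i)}_{k i}` for all `i`. -/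
theorem smolyak_no_internal_aliasing_abstract (d : ℕ)
    (V : Fin d → Type*)
    [∀ i, AddCommGroup (V i)] [∀ i, Module ℝ (V i)]
    (S : ∀ i, ℕ → (V i →ₗ[ℝ] V i))
    (hzero : ∀ i, S i 0 = 0)
    (hnested : ∀ i, ∀ m m' : ℕ, m ≤ m' → ∀ v : V i,
      S i m v = v → S i m' v = v)
    (K : Finset (Fin d → ℕ))
    (hpos : ∀ k ∈ K, ∀ i, 1 ≤ k i)
    (hadm : ∀ k ∈ K, ∀ i, 2 ≤ k i → Function.update k i (k i - 1) ∈ K) :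
    ∀ x ∈ Submodule.span ℝ
        {x : ⨂[ℝ] i, V i | ∃ k ∈ K, ∃ v : ∀ i, V i,
          (∀ i, S i (k i) (v i) = v i) ∧ x = PiTensorProduct.tprod ℝ v},
      (∑ k ∈ K, PiTensorProduct.map (fun i => S i (k i) - S i (k i - 1))) x = x := by
  intro x hx
  induction hx using Submodule.span_induction with
  | zero => simp
  | add x y _ _ hx hy => rw [map_add, hx, hy]
  | smul c x _ hx => rw [map_smul, hx]
  | mem x hx =>
    obtain ⟨k₀, hk₀, v, hv, rfl⟩ := hx
    rw [LinearMap.sum_apply]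
    simp only [PiTensorProduct.map_tprod]
    -- the box below k₀
    set B : Finset (Fin d → ℕ) := Fintype.piFinset (fun i => Finset.Icc 1 (k₀ i)) with hB
    have hBsub : B ⊆ K := by
      intro k hk
      rw [hB, Fintype.mem_piFinset] at hk
      refine smolyak_box_mem d K hadm _ k₀ hk₀ k ?_ ?_ rfl
      · exact fun i => (Finset.mem_Icc.mp (hk i)).1
      · exact fun i => (Finset.mem_Icc.mp (hk i)).2
    have hstep : (∑ k ∈ K, PiTensorProduct.tprod ℝ
          (fun i => (S i (k i) - S i (k i - 1)) (v i)))
        = ∑ k ∈ B, PiTensorProduct.tprod ℝ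
          (fun i => (S i (k i) - S i (k i - 1)) (v i)) := by
      refine (Finset.sum_subset hBsub ?_).symm
      intro k hkK hkB
      rw [hB, Fintype.mem_piFinset] at hkB
      push_neg at hkB
      obtain ⟨i, hi⟩ := hkB
      rw [Finset.mem_Icc] at hi
      push_neg at hi
      have hgt : k₀ i < k i := hi (hpos k hkK i)
      have hz : (S i (k i) - S i (k i - 1)) (v i) = 0 := by
        have h1 : S i (k i) (v i) = v i :=
          hnested i _ _ (le_of_lt hgt) _ (hv i)
        have h2 : S i (k i - 1) (v i) = v i :=
          hnested i _ _ (by omega) _ (hv i)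
        simp [LinearMap.sub_apply, h1, h2]
      exact MultilinearMap.map_coord_zero _ i hz
    rw [hstep, hB,
      ← MultilinearMap.map_sum_finset (PiTensorProduct.tprod ℝ)
        (fun i m => (S i m - S i (m - 1)) (v i)) (fun i => Finset.Icc 1 (k₀ i))]
    have tel : (fun i => ∑ m ∈ Finset.Icc 1 (k₀ i), (S i m - S i (m - 1)) (v i)) = v := by
      funext i
      have gen : ∀ n : ℕ, ∑ m ∈ Finset.Icc 1 n, (S i m - S i (m - 1)) (v i)
          = S i n (v i) := by
        intro n
        induction n with
        | zero => simp [hzero i]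
        | succ n ihn =>
          rw [Finset.sum_Icc_succ_top (by omega : 1 ≤ n + 1), ihn]
          simp
      rw [gen, hv i]
    rw [tel]
end

section
/- For each l = 1,…,d let μ_l be a measure on ℝ with all polynomial moments finite, (ψ^{(l)}_n)_{n≥0} an orthonormal polynomial family for μ_l, and (Q^{(l)}_m)_{m≥1} quadrature rules with Q^{(l)}_m exact of degree a_l(m) for μ_l, where each a_l is nondecreasing; set q_l(m) := ⌊a_l(m)/2⌋. Let K ⊆ {1,2,…}^d be a finite admissible multi-index set and let A(K,d,S) := Σ_{k∈K} Δ^{(1)}_{k_1} ⊗ ⋯ ⊗ Δ^{(d)}_{k_d} be the Smolyak pseudospectral operator built from the full tensor pseudospectral approximations S_k. Then A(K,d,S) has no internal aliasing: for every polynomial p in the span of {Ψ_j : there exists k ∈ K with j_l ≤ q_l(k_l) for all l}, A(K,d,S)(p) = p. -/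
open MeasureTheory

/-- The full tensor pseudospectral approximation at level `k`,
`S_k(f) = ∑_{j : j l ≤ q l (k l) ∀ l} Q_k(f Ψ_j) Ψ_j` with `q l m = ⌊a l m / 2⌋`;
it is defined to be `0` if some component of `k` is `0` (level-0 operator is zero). -/
noncomputable def fullPseudo {d : ℕ} (N : Fin d → ℕ → ℕ)
    (x w : ∀ (l : Fin d) (m : ℕ), Fin (N l m) → ℝ)
    (ψ : Fin d → ℕ → Polynomial ℝ) (a : Fin d → ℕ → ℕ)
    (k : Fin d → ℕ) (f : (Fin d → ℝ) → ℝ) : (Fin d → ℝ) → ℝ :=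
  if ∀ l, 1 ≤ k l then
    fun y => ∑ j ∈ Fintype.piFinset (fun l => Finset.range (a l (k l) / 2 + 1)),
      tensorQuad N x w k (fun z => f z * multiPsi ψ j z) * multiPsi ψ j y
  else 0

/-- The Smolyak pseudospectral operator `A(K,d,S) = ∑_{k ∈ K} Δ_{k 1} ⊗ ⋯ ⊗ Δ_{k d}`,
with levelwise differences expanded multilinearly:
`Δ_{k 1} ⊗ ⋯ ⊗ Δ_{k d} = ∑_{S ⊆ {1,…,d}} (−1)^{|S|} S_{k − 1_S}`. -/
noncomputable def smolyakPseudo {d : ℕ} (N : Fin d → ℕ → ℕ)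
    (x w : ∀ (l : Fin d) (m : ℕ), Fin (N l m) → ℝ)
    (ψ : Fin d → ℕ → Polynomial ℝ) (a : Fin d → ℕ → ℕ)
    (K : Finset (Fin d → ℕ)) (f : (Fin d → ℝ) → ℝ) : (Fin d → ℝ) → ℝ :=
  ∑ k ∈ K, ∑ S ∈ (Finset.univ : Finset (Fin d)).powerset,
    ((-1 : ℝ) ^ S.card) •
      fullPseudo N x w ψ a (fun l => k l - if l ∈ S then 1 else 0) f


/-- 1-D quadrature applied to a product of two basis polynomials. -/
noncomputable def oneC {d : ℕ} (N : Fin d → ℕ → ℕ)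
    (x w : ∀ (l : Fin d) (m : ℕ), Fin (N l m) → ℝ)
    (ψ : Fin d → ℕ → Polynomial ℝ) (l : Fin d) (m n n' : ℕ) : ℝ :=
  ∑ i, w l m i * ((ψ l n).eval (x l m i) * (ψ l n').eval (x l m i))

/-- 1-D pseudospectral approximation of `ψ l jl` at level `m`, evaluated at `u`. -/
noncomputable def oneS {d : ℕ} (N : Fin d → ℕ → ℕ)
    (x w : ∀ (l : Fin d) (m : ℕ), Fin (N l m) → ℝ)
    (ψ : Fin d → ℕ → Polynomial ℝ) (a : Fin d → ℕ → ℕ)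
    (l : Fin d) (jl m : ℕ) (u : ℝ) : ℝ :=
  if 1 ≤ m then
    ∑ n ∈ Finset.range (a l m / 2 + 1), oneC N x w ψ l m jl n * (ψ l n).eval u
  else 0

lemma fullPseudo_multiPsi {d : ℕ} (N : Fin d → ℕ → ℕ)
    (x w : ∀ (l : Fin d) (m : ℕ), Fin (N l m) → ℝ)
    (ψ : Fin d → ℕ → Polynomial ℝ) (a : Fin d → ℕ → ℕ)
    (k j : Fin d → ℕ) (y : Fin d → ℝ) :
    fullPseudo N x w ψ a k (multiPsi ψ j) y
      = ∏ l, oneS N x w ψ a l (j l) (k l) (y l) := by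
  by_cases h : ∀ l, 1 ≤ k l
  · rw [fullPseudo, if_pos h]
    have hrhs : (∏ l, oneS N x w ψ a l (j l) (k l) (y l))
        = ∏ l, ∑ n ∈ Finset.range (a l (k l) / 2 + 1),
            oneC N x w ψ l (k l) (j l) n * (ψ l n).eval (y l) :=
      Finset.prod_congr rfl fun l _ => by rw [oneS, if_pos (h l)]
    rw [hrhs, Finset.prod_univ_sum]
    refine Finset.sum_congr rfl fun j' _ => ?_
    have hq : tensorQuad N x w k (fun z => multiPsi ψ j z * multiPsi ψ j' z)
        = ∏ l, oneC N x w ψ l (k l) (j l) (j' l) := by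
      unfold oneC
      rw [Finset.prod_univ_sum, Fintype.piFinset_univ, tensorQuad]
      refine Finset.sum_congr rfl fun i _ => ?_
      simp only [multiPsi]
      rw [← Finset.prod_mul_distrib, ← Finset.prod_mul_distrib]
    rw [hq, multiPsi, ← Finset.prod_mul_distrib]
  · rw [fullPseudo, if_neg h, Pi.zero_apply]
    push_neg at h
    obtain ⟨l, hl⟩ := h
    refine (Finset.prod_eq_zero (Finset.mem_univ l) ?_).symm
    rw [oneS, if_neg (not_le.mpr hl)]

lemma oneS_eq_eval {d : ℕ} (N : Fin d → ℕ → ℕ)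
    (x w : ∀ (l : Fin d) (m : ℕ), Fin (N l m) → ℝ)
    (ψ : Fin d → ℕ → Polynomial ℝ) (a : Fin d → ℕ → ℕ)
    (μ : Fin d → Measure ℝ)
    (hdeg : ∀ l m, (ψ l m).natDegree = m)
    (horth : ∀ l m m',
      ∫ t, (ψ l m).eval t * (ψ l m').eval t ∂(μ l) = if m = m' then 1 else 0)
    (hexact : ∀ (l : Fin d) (m : ℕ), 1 ≤ m → ∀ p : Polynomial ℝ,
      p.natDegree ≤ a l m →
      ∑ i, w l m i * p.eval (x l m i) = ∫ t, p.eval t ∂(μ l))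
    (l : Fin d) (jl m : ℕ) (hm : 1 ≤ m) (hle : jl ≤ a l m / 2) (u : ℝ) :
    oneS N x w ψ a l jl m u = (ψ l jl).eval u := by
  rw [oneS, if_pos hm]
  have key : ∀ n ∈ Finset.range (a l m / 2 + 1),
      oneC N x w ψ l m jl n = if jl = n then 1 else 0 := by
    intro n hn
    rw [Finset.mem_range] at hn
    have hn' : n ≤ a l m / 2 := Nat.lt_succ_iff.mp hn
    have hdegp : ((ψ l jl) * (ψ l n)).natDegree ≤ a l m := by
      calc ((ψ l jl) * (ψ l n)).natDegree
          ≤ (ψ l jl).natDegree + (ψ l n).natDegree := Polynomial.natDegree_mul_le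
        _ = jl + n := by rw [hdeg, hdeg]
        _ ≤ a l m := by omega
    calc oneC N x w ψ l m jl n
        = ∑ i, w l m i * ((ψ l jl) * (ψ l n)).eval (x l m i) := by
          unfold oneC; simp [Polynomial.eval_mul]
      _ = ∫ t, ((ψ l jl) * (ψ l n)).eval t ∂(μ l) := hexact l m hm _ hdegp
      _ = ∫ t, (ψ l jl).eval t * (ψ l n).eval t ∂(μ l) := by
          simp [Polynomial.eval_mul]
      _ = if jl = n then 1 else 0 := horth l jl n
  rw [Finset.sum_congr rfl fun n hn => by rw [key n hn]]
  simp only [ite_mul, one_mul, zero_mul, Finset.sum_ite_eq, Finset.mem_range]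
  rw [if_pos (Nat.lt_succ_of_le hle)]


lemma box_subset_of_admissible {d : ℕ} (K : Finset (Fin d → ℕ))
    (hadm : ∀ k ∈ K, ∀ i, 2 ≤ k i → Function.update k i (k i - 1) ∈ K)
    (kstar : Fin d → ℕ) (hk : kstar ∈ K) :
    ∀ k : Fin d → ℕ, (∀ l, 1 ≤ k l) → (∀ l, k l ≤ kstar l) → k ∈ K := by
  have H : ∀ n : ℕ, ∀ k : Fin d → ℕ, (∑ l, (kstar l - k l)) = n →
      (∀ l, 1 ≤ k l) → (∀ l, k l ≤ kstar l) → k ∈ K := by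
    intro n
    induction n with
    | zero =>
      intro k hsum h1 h2
      have : k = kstar := by
        funext l
        have := Finset.sum_eq_zero_iff.mp hsum l (Finset.mem_univ l)
        have := h2 l
        omega
      rwa [this]
    | succ n ih =>
      intro k hsum h1 h2
      have hex : ∃ l, k l < kstar l := by
        by_contra hc
        push_neg at hc
        have hz : ∀ l ∈ Finset.univ, kstar l - k l = 0 := fun l _ => by
          have := hc l; omega
        rw [Finset.sum_congr rfl hz, Finset.sum_const_zero] at hsum
        omega
      obtain ⟨l0, hl0⟩ := hex
      have h1' : ∀ l, 1 ≤ Function.update k l0 (k l0 + 1) l := by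
        intro l; rcases eq_or_ne l l0 with rfl | hl
        · rw [Function.update_self]; omega
        · rw [Function.update_of_ne hl]; exact h1 l
      have h2' : ∀ l, Function.update k l0 (k l0 + 1) l ≤ kstar l := by
        intro l; rcases eq_or_ne l l0 with rfl | hl
        · rw [Function.update_self]; omega
        · rw [Function.update_of_ne hl]; exact h2 l
      have hsum' : (∑ l, (kstar l - Function.update k l0 (k l0 + 1) l)) = n := by
        have e1 : (∑ l, (kstar l - k l))
            = (kstar l0 - k l0) + ∑ l ∈ Finset.univ.erase l0, (kstar l - k l) :=
          (Finset.add_sum_erase _ (fun l => kstar l - k l) (Finset.mem_univ l0)).symm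
        have e2 : (∑ l, (kstar l - Function.update k l0 (k l0 + 1) l))
            = (kstar l0 - Function.update k l0 (k l0 + 1) l0)
              + ∑ l ∈ Finset.univ.erase l0,
                  (kstar l - Function.update k l0 (k l0 + 1) l) :=
          (Finset.add_sum_erase _
            (fun l => kstar l - Function.update k l0 (k l0 + 1) l)
            (Finset.mem_univ l0)).symm
        have e3 : (∑ l ∈ Finset.univ.erase l0,
              (kstar l - Function.update k l0 (k l0 + 1) l))
            = ∑ l ∈ Finset.univ.erase l0, (kstar l - k l) :=
          Finset.sum_congr rfl fun l hl => by
            rw [Function.update_of_ne (Finset.ne_of_mem_erase hl)]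
        rw [e2, e3, Function.update_self]
        rw [e1] at hsum
        omega
      have hK' := ih _ hsum' h1' h2'
      have h2'' : 2 ≤ Function.update k l0 (k l0 + 1) l0 := by
        rw [Function.update_self]
        have := h1 l0
        omega
      have hfin := hadm _ hK' l0 h2''
      have heq : Function.update (Function.update k l0 (k l0 + 1)) l0
          (Function.update k l0 (k l0 + 1) l0 - 1) = k := by
        funext l
        rcases eq_or_ne l l0 with rfl | hl
        · rw [Function.update_self, Function.update_self]
          omega
        · rw [Function.update_of_ne hl, Function.update_of_ne hl]
      rwa [heq] at hfin
  intro k h1 h2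
  exact H _ k rfl h1 h2


lemma fullPseudo_add {d : ℕ} (N : Fin d → ℕ → ℕ)
    (x w : ∀ (l : Fin d) (m : ℕ), Fin (N l m) → ℝ)
    (ψ : Fin d → ℕ → Polynomial ℝ) (a : Fin d → ℕ → ℕ)
    (k : Fin d → ℕ) (f g : (Fin d → ℝ) → ℝ) :
    fullPseudo N x w ψ a k (f + g)
      = fullPseudo N x w ψ a k f + fullPseudo N x w ψ a k g := by
  unfold fullPseudo
  by_cases h : ∀ l, 1 ≤ k l
  · simp only [if_pos h]
    funext y
    simp only [Pi.add_apply]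
    rw [← Finset.sum_add_distrib]
    refine Finset.sum_congr rfl fun j _ => ?_
    rw [← add_mul]
    congr 1
    unfold tensorQuad
    rw [← Finset.sum_add_distrib]
    refine Finset.sum_congr rfl fun i _ => ?_
    simp only [Pi.add_apply]
    ring
  · simp [if_neg h]

lemma fullPseudo_smul {d : ℕ} (N : Fin d → ℕ → ℕ)
    (x w : ∀ (l : Fin d) (m : ℕ), Fin (N l m) → ℝ)
    (ψ : Fin d → ℕ → Polynomial ℝ) (a : Fin d → ℕ → ℕ)
    (k : Fin d → ℕ) (c : ℝ) (f : (Fin d → ℝ) → ℝ) :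
    fullPseudo N x w ψ a k (c • f) = c • fullPseudo N x w ψ a k f := by
  unfold fullPseudo
  by_cases h : ∀ l, 1 ≤ k l
  · simp only [if_pos h]
    funext y
    simp only [Pi.smul_apply, smul_eq_mul, Finset.mul_sum]
    refine Finset.sum_congr rfl fun j _ => ?_
    rw [← mul_assoc]
    congr 1
    unfold tensorQuad
    rw [Finset.mul_sum]
    refine Finset.sum_congr rfl fun i _ => ?_
    simp only [Pi.smul_apply, smul_eq_mul]
    ring
  · simp [if_neg h]

lemma fullPseudo_zero {d : ℕ} (N : Fin d → ℕ → ℕ)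
    (x w : ∀ (l : Fin d) (m : ℕ), Fin (N l m) → ℝ)
    (ψ : Fin d → ℕ → Polynomial ℝ) (a : Fin d → ℕ → ℕ)
    (k : Fin d → ℕ) :
    fullPseudo N x w ψ a k (0 : (Fin d → ℝ) → ℝ) = 0 := by
  unfold fullPseudo
  by_cases h : ∀ l, 1 ≤ k l
  · simp only [if_pos h]
    funext y
    simp [tensorQuad]
  · simp [if_neg h]

lemma smolyakPseudo_add {d : ℕ} (N : Fin d → ℕ → ℕ)
    (x w : ∀ (l : Fin d) (m : ℕ), Fin (N l m) → ℝ)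
    (ψ : Fin d → ℕ → Polynomial ℝ) (a : Fin d → ℕ → ℕ)
    (K : Finset (Fin d → ℕ)) (f g : (Fin d → ℝ) → ℝ) :
    smolyakPseudo N x w ψ a K (f + g)
      = smolyakPseudo N x w ψ a K f + smolyakPseudo N x w ψ a K g := by
  unfold smolyakPseudo
  rw [← Finset.sum_add_distrib]
  refine Finset.sum_congr rfl fun k _ => ?_
  rw [← Finset.sum_add_distrib]
  refine Finset.sum_congr rfl fun S _ => ?_
  rw [fullPseudo_add, smul_add]

lemma smolyakPseudo_smul {d : ℕ} (N : Fin d → ℕ → ℕ)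
    (x w : ∀ (l : Fin d) (m : ℕ), Fin (N l m) → ℝ)
    (ψ : Fin d → ℕ → Polynomial ℝ) (a : Fin d → ℕ → ℕ)
    (K : Finset (Fin d → ℕ)) (c : ℝ) (f : (Fin d → ℝ) → ℝ) :
    smolyakPseudo N x w ψ a K (c • f) = c • smolyakPseudo N x w ψ a K f := by
  unfold smolyakPseudo
  rw [Finset.smul_sum]
  refine Finset.sum_congr rfl fun k _ => ?_
  rw [Finset.smul_sum]
  refine Finset.sum_congr rfl fun S _ => ?_
  rw [fullPseudo_smul, smul_comm]

lemma smolyakPseudo_zero {d : ℕ} (N : Fin d → ℕ → ℕ)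
    (x w : ∀ (l : Fin d) (m : ℕ), Fin (N l m) → ℝ)
    (ψ : Fin d → ℕ → Polynomial ℝ) (a : Fin d → ℕ → ℕ)
    (K : Finset (Fin d → ℕ)) :
    smolyakPseudo N x w ψ a K (0 : (Fin d → ℝ) → ℝ) = 0 := by
  unfold smolyakPseudo
  refine Finset.sum_eq_zero fun k _ => Finset.sum_eq_zero fun S _ => ?_
  rw [fullPseudo_zero, smul_zero]


set_option maxHeartbeats 1000000 in
/-- (No internal aliasing for Smolyak pseudospectral approximation.)
For each `l` let `μ l` have all polynomial moments finite, `ψ l` be an orthonormal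
polynomial family for `μ l`, and `Q^{(l)}_m` be exact of degree `a l m` for `μ l`, with
`a l` nondecreasing on levels `≥ 1`; `q l m = ⌊a l m / 2⌋`.  For every finite admissible
multi-index set `K ⊆ {1,2,…}^d`, the Smolyak pseudospectral operator `A(K,d,S)`
satisfies `A(K,d,S)(p) = p` for every `p` in the span of
`{Ψ_j : ∃ k ∈ K, j l ≤ q l (k l) for all l}`. -/
theorem smolyak_pseudospectral_no_internal_aliasing (d : ℕ)
    (μ : Fin d → Measure ℝ)
    (hmom : ∀ l (n : ℕ), Integrable (fun t => t ^ n) (μ l))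
    (ψ : Fin d → ℕ → Polynomial ℝ)
    (hdeg : ∀ l m, (ψ l m).natDegree = m)
    (horth : ∀ l m m',
      ∫ t, (ψ l m).eval t * (ψ l m').eval t ∂(μ l) = if m = m' then 1 else 0)
    (N : Fin d → ℕ → ℕ) (x w : ∀ (l : Fin d) (m : ℕ), Fin (N l m) → ℝ)
    (a : Fin d → ℕ → ℕ)
    (hmono : ∀ l, ∀ m m' : ℕ, 1 ≤ m → m ≤ m' → a l m ≤ a l m')
    (hexact : ∀ (l : Fin d) (m : ℕ), 1 ≤ m → ∀ p : Polynomial ℝ,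
      p.natDegree ≤ a l m →
      ∑ i, w l m i * p.eval (x l m i) = ∫ t, p.eval t ∂(μ l))
    (K : Finset (Fin d → ℕ))
    (hpos : ∀ k ∈ K, ∀ i, 1 ≤ k i)
    (hadm : ∀ k ∈ K, ∀ i, 2 ≤ k i → Function.update k i (k i - 1) ∈ K) :
    ∀ p ∈ Submodule.span ℝ
        {g : (Fin d → ℝ) → ℝ | ∃ j : Fin d → ℕ,
          (∃ k ∈ K, ∀ l, j l ≤ a l (k l) / 2) ∧ g = multiPsi ψ j},
      smolyakPseudo N x w ψ a K p = p := by
  intro p hp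
  induction hp using Submodule.span_induction with
  | mem g hg =>
    obtain ⟨j, ⟨kstar, hkK, hjq⟩, rfl⟩ := hg
    classical
    have ht1 : ∀ l, 1 ≤ kstar l := hpos kstar hkK
    have hjm : ∀ l m, kstar l ≤ m → j l ≤ a l m / 2 := fun l m hm =>
      le_trans (hjq l) (Nat.div_le_div_right (hmono l (kstar l) m (ht1 l) hm))
    have hSex : ∀ l m, kstar l ≤ m → ∀ u,
        oneS N x w ψ a l (j l) m u = (ψ l (j l)).eval u :=
      fun l m hm u => oneS_eq_eval N x w ψ a μ hdeg horth hexact l (j l) m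
        (le_trans (ht1 l) hm) (hjm l m hm) u
    funext y
    have step1 : smolyakPseudo N x w ψ a K (multiPsi ψ j) y
        = ∑ k ∈ K, ∏ l,
            (oneS N x w ψ a l (j l) (k l) (y l)
              - oneS N x w ψ a l (j l) (k l - 1) (y l)) := by
      rw [smolyakPseudo, Finset.sum_apply]
      refine Finset.sum_congr rfl fun k _ => ?_
      rw [Finset.sum_apply]
      have hterm : ∀ S ∈ (Finset.univ : Finset (Fin d)).powerset,
          (((-1 : ℝ) ^ S.card) •
            fullPseudo N x w ψ a (fun l => k l - if l ∈ S then 1 else 0)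
              (multiPsi ψ j)) y
          = (∏ l ∈ S, (-(oneS N x w ψ a l (j l) (k l - 1) (y l)))) *
            ∏ l ∈ Finset.univ \ S, oneS N x w ψ a l (j l) (k l) (y l) := by
        intro S _
        rw [Pi.smul_apply, smul_eq_mul, fullPseudo_multiPsi]
        have hun : S ∪ ((Finset.univ : Finset (Fin d)) \ S) = Finset.univ :=
          Finset.union_sdiff_of_subset (Finset.subset_univ S)
        have hsplit : (∏ l, oneS N x w ψ a l (j l)
              (k l - if l ∈ S then 1 else 0) (y l))
            = (∏ l ∈ S, oneS N x w ψ a l (j l) (k l - 1) (y l)) *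
              ∏ l ∈ Finset.univ \ S, oneS N x w ψ a l (j l) (k l) (y l) := by
          calc (∏ l, oneS N x w ψ a l (j l)
                  (k l - if l ∈ S then 1 else 0) (y l))
              = ∏ l ∈ S ∪ ((Finset.univ : Finset (Fin d)) \ S),
                  oneS N x w ψ a l (j l) (k l - if l ∈ S then 1 else 0) (y l) := by
                rw [hun]
            _ = (∏ l ∈ S, oneS N x w ψ a l (j l)
                    (k l - if l ∈ S then 1 else 0) (y l)) *
                ∏ l ∈ Finset.univ \ S, oneS N x w ψ a l (j l)
                    (k l - if l ∈ S then 1 else 0) (y l) :=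
                Finset.prod_union Finset.disjoint_sdiff
            _ = (∏ l ∈ S, oneS N x w ψ a l (j l) (k l - 1) (y l)) *
                ∏ l ∈ Finset.univ \ S, oneS N x w ψ a l (j l) (k l) (y l) := by
                congr 1
                · exact Finset.prod_congr rfl fun l hl => by rw [if_pos hl]
                · refine Finset.prod_congr rfl fun l hl => by
                    rw [if_neg (Finset.mem_sdiff.mp hl).2, Nat.sub_zero]
        have hneg : (∏ l ∈ S, (-(oneS N x w ψ a l (j l) (k l - 1) (y l))))
            = (-1 : ℝ) ^ S.card * ∏ l ∈ S, oneS N x w ψ a l (j l) (k l - 1) (y l) := by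
          rw [Finset.prod_congr rfl
            (fun l _ => neg_eq_neg_one_mul (oneS N x w ψ a l (j l) (k l - 1) (y l))),
            Finset.prod_mul_distrib, Finset.prod_const]
        rw [hsplit, hneg]
        ring
      rw [Finset.sum_congr rfl hterm, ← Finset.prod_add]
      refine Finset.prod_congr rfl fun l _ => by ring
    have step2 : (∑ k ∈ K, ∏ l,
            (oneS N x w ψ a l (j l) (k l) (y l)
              - oneS N x w ψ a l (j l) (k l - 1) (y l)))
        = ∑ k ∈ Fintype.piFinset (fun l => Finset.Icc 1 (kstar l)), ∏ l,
            (oneS N x w ψ a l (j l) (k l) (y l)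
              - oneS N x w ψ a l (j l) (k l - 1) (y l)) := by
      refine (Finset.sum_subset ?_ ?_).symm
      · intro k hk
        rw [Fintype.mem_piFinset] at hk
        exact box_subset_of_admissible K hadm kstar hkK k
          (fun l => (Finset.mem_Icc.mp (hk l)).1)
          (fun l => (Finset.mem_Icc.mp (hk l)).2)
      · intro k hkK' hknot
        rw [Fintype.mem_piFinset] at hknot
        push_neg at hknot
        obtain ⟨l, hl⟩ := hknot
        rw [Finset.mem_Icc] at hl
        have h1 : 1 ≤ k l := hpos k hkK' l
        have h2 : kstar l < k l := by
          by_contra hc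
          exact hl ⟨h1, by omega⟩
        refine Finset.prod_eq_zero (Finset.mem_univ l) ?_
        rw [hSex l (k l) (by omega), hSex l (k l - 1) (by omega), sub_self]
    have step3 : (∑ k ∈ Fintype.piFinset (fun l => Finset.Icc 1 (kstar l)), ∏ l,
            (oneS N x w ψ a l (j l) (k l) (y l)
              - oneS N x w ψ a l (j l) (k l - 1) (y l)))
        = ∏ l, ∑ m ∈ Finset.Icc 1 (kstar l),
            (oneS N x w ψ a l (j l) m (y l)
              - oneS N x w ψ a l (j l) (m - 1) (y l)) :=
      (Finset.prod_univ_sum (fun l => Finset.Icc 1 (kstar l))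
        (fun l m => oneS N x w ψ a l (j l) m (y l)
          - oneS N x w ψ a l (j l) (m - 1) (y l))).symm
    have step4 : ∀ l, (∑ m ∈ Finset.Icc 1 (kstar l),
            (oneS N x w ψ a l (j l) m (y l)
              - oneS N x w ψ a l (j l) (m - 1) (y l)))
        = (ψ l (j l)).eval (y l) := by
      intro l
      rw [← Finset.Ico_add_one_right_eq_Icc, Finset.sum_Ico_eq_sum_range]
      have hre : ∀ i ∈ Finset.range (kstar l + 1 - 1),
          (oneS N x w ψ a l (j l) (1 + i) (y l)
            - oneS N x w ψ a l (j l) (1 + i - 1) (y l))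
          = (fun m => oneS N x w ψ a l (j l) m (y l)) (i + 1)
            - (fun m => oneS N x w ψ a l (j l) m (y l)) i := by
        intro i _
        have h2 : 1 + i - 1 = i := by omega
        have h1 : 1 + i = i + 1 := by omega
        simp only [h2, h1, Nat.add_sub_cancel]
      rw [Finset.sum_congr rfl hre,
        Finset.sum_range_sub (fun m => oneS N x w ψ a l (j l) m (y l))]
      have h0 : oneS N x w ψ a l (j l) 0 (y l) = 0 := by
        rw [oneS, if_neg (by omega)]
      have hmt : kstar l + 1 - 1 = kstar l := by omega
      rw [hmt, hSex l (kstar l) le_rfl, h0, sub_zero]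
    rw [step1, step2, step3, Finset.prod_congr rfl fun l _ => step4 l]
    rfl
  | zero => exact smolyakPseudo_zero N x w ψ a K
  | add f g hf hg ihf ihg => rw [smolyakPseudo_add, ihf, ihg]
  | smul c f hf ihf => rw [smolyakPseudo_smul, ihf]
end

section
/- In the Smolyak pseudospectral setting, let K ⊆ {1,2,…}^d be a finite admissible multi-index set with Smolyak coefficients c_k = Σ_{z∈{0,1}^d, k+z∈K} (−1)^{‖z‖₁}, and let j be a multi-index included in the expansion (there exists k ∈ K with j_l ≤ q_l(k_l) for all l). Define the computed coefficient functional F_j(f) := Σ_{k∈K, j_l ≤ q_l(k_l) ∀l} c_k Q_k(f Ψ_j). If j′ is any multi-index for which there exists a dimension i with j′_i < j_i, then there is no external aliasing of Ψ_{j′} onto Ψ_j: F_j(Ψ_{j′}) = 0. -/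
open MeasureTheory

/-- The computed coefficient functional of the Smolyak pseudospectral approximation:
`F_j(f) = ∑_{k ∈ K, j l ≤ q l (k l) ∀ l} c_k Q_k(f Ψ_j)`, where `q l m = ⌊a l m / 2⌋`
(the coefficient of `Ψ_j` in `A(K,d,S)(f) = ∑_{k ∈ K} c_k S_k(f)`). -/
noncomputable def smolyakCoeffFunctional {d : ℕ} (N : Fin d → ℕ → ℕ)
    (x w : ∀ (l : Fin d) (m : ℕ), Fin (N l m) → ℝ)
    (ψ : Fin d → ℕ → Polynomial ℝ) (a : Fin d → ℕ → ℕ)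
    (K : Finset (Fin d → ℕ)) (j : Fin d → ℕ) (f : (Fin d → ℝ) → ℝ) : ℝ :=
  ∑ k ∈ K.filter (fun k => ∀ l, j l ≤ a l (k l) / 2),
    (smolyakCoeff K k : ℝ) * tensorQuad N x w k (fun z => f z * multiPsi ψ j z)

/-- (Theorem 3.3, condition (a): no external aliasing.)
In the Smolyak pseudospectral setting (orthonormal families `ψ l` for measures `μ l`
with all moments finite; quadrature rules `Q^{(l)}_m` exact of degree `a l m`, `a l`
nondecreasing; `K` finite admissible), let `j` be a multi-index included in the
expansion and `j'` a multi-index such that `j' i < j i` for some dimension `i`.  Then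
there is no external aliasing of `Ψ_{j'}` onto `Ψ_j`: `F_j(Ψ_{j'}) = 0`. -/
theorem smolyak_no_external_aliasing_condition_a (d : ℕ)
    (μ : Fin d → Measure ℝ)
    (hmom : ∀ l (n : ℕ), Integrable (fun t => t ^ n) (μ l))
    (ψ : Fin d → ℕ → Polynomial ℝ)
    (hdeg : ∀ l m, (ψ l m).natDegree = m)
    (horth : ∀ l m m',
      ∫ t, (ψ l m).eval t * (ψ l m').eval t ∂(μ l) = if m = m' then 1 else 0)
    (N : Fin d → ℕ → ℕ) (x w : ∀ (l : Fin d) (m : ℕ), Fin (N l m) → ℝ)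
    (a : Fin d → ℕ → ℕ)
    (hmono : ∀ l, ∀ m m' : ℕ, 1 ≤ m → m ≤ m' → a l m ≤ a l m')
    (hexact : ∀ (l : Fin d) (m : ℕ), 1 ≤ m → ∀ p : Polynomial ℝ,
      p.natDegree ≤ a l m →
      ∑ i, w l m i * p.eval (x l m i) = ∫ t, p.eval t ∂(μ l))
    (K : Finset (Fin d → ℕ))
    (hpos : ∀ k ∈ K, ∀ i, 1 ≤ k i)
    (hadm : ∀ k ∈ K, ∀ i, 2 ≤ k i → Function.update k i (k i - 1) ∈ K)
    (j j' : Fin d → ℕ)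
    (hinc : ∃ k ∈ K, ∀ l, j l ≤ a l (k l) / 2)
    (hdim : ∃ i, j' i < j i) :
    smolyakCoeffFunctional N x w ψ a K j (multiPsi ψ j') = 0 := by
  obtain ⟨i₀, hi₀⟩ := hdim
  unfold smolyakCoeffFunctional
  apply Finset.sum_eq_zero
  intro k hk
  rw [Finset.mem_filter] at hk
  obtain ⟨hkK, hkq⟩ := hk
  suffices h : tensorQuad N x w k (fun z => multiPsi ψ j' z * multiPsi ψ j z) = 0 by
    rw [h, mul_zero]
  unfold tensorQuad multiPsi
  have hfac : ∀ ii : ∀ l, Fin (N l (k l)),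
      (∏ l, w l (k l) (ii l)) *
        ((∏ l, (ψ l (j' l)).eval (x l (k l) (ii l))) *
          ∏ l, (ψ l (j l)).eval (x l (k l) (ii l))) =
      ∏ l, (w l (k l) (ii l) *
        ((ψ l (j' l)) * (ψ l (j l))).eval (x l (k l) (ii l))) := by
    intro ii
    simp only [Polynomial.eval_mul]
    rw [Finset.prod_mul_distrib, ← Finset.prod_mul_distrib, ← Finset.prod_mul_distrib]
  simp only [hfac]
  have : (∑ ii : ∀ l, Fin (N l (k l)),
      ∏ l, (w l (k l) (ii l) * ((ψ l (j' l)) * (ψ l (j l))).eval (x l (k l) (ii l)))) =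
      ∏ l, ∑ i, (w l (k l) i * ((ψ l (j' l)) * (ψ l (j l))).eval (x l (k l) i)) := by
    rw [Finset.prod_univ_sum]
    rw [← Fintype.piFinset_univ]
  rw [this]
  apply Finset.prod_eq_zero (Finset.mem_univ i₀)
  have hk1 : 1 ≤ k i₀ := hpos k hkK i₀
  have hdegle : ((ψ i₀ (j' i₀)) * (ψ i₀ (j i₀))).natDegree ≤ a i₀ (k i₀) := by
    calc ((ψ i₀ (j' i₀)) * (ψ i₀ (j i₀))).natDegree
        ≤ (ψ i₀ (j' i₀)).natDegree + (ψ i₀ (j i₀)).natDegree :=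
          Polynomial.natDegree_mul_le
      _ = j' i₀ + j i₀ := by rw [hdeg, hdeg]
      _ ≤ a i₀ (k i₀) := by
          have h2 : 2 * j i₀ ≤ a i₀ (k i₀) := by
            have := hkq i₀
            omega
          omega
  rw [hexact i₀ (k i₀) hk1 _ hdegle]
  simp only [Polynomial.eval_mul]
  rw [horth i₀ (j' i₀) (j i₀)]
  simp [Nat.ne_of_lt hi₀]
end
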